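/- Let ν be a Borel probability measure on ℝ^d. For each l ∈ ℕ, suppose given sequences of points b_{i,l}, e_{i,l} ∈ ℝ^d (i ∈ ℕ) with |e_{i,l} − b_{i,l}| ≤ l for all i, such that for every φ ∈ C_0(ℝ^d), lim_{n→∞} (1/n) Σ_{i=1}^n φ(b_{i,l}) = ∫ φ dν and lim_{n→∞} (1/n) Σ_{i=1}^n φ(e_{i,l}) = ∫ φ dν. Then limsup_{l→∞} limsup_{n→∞} (1/(n·l)) Σ_{i=1}^n |e_{i,l} − b_{i,l}| = 0. -/

import Mathlib

/-!
Fix a bump `φ_R ∈ C₀(ℝ^d)` with values in `[0, 1]`, equal to `1` on the ball of radius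
`R + 1` and vanishing outside the ball of radius `ρ = R + 2`. If both `b` and `e` lie in the
support of `φ_R` then `|e - b| ≤ 2ρ`; otherwise one of `1 - φ_R(b)`, `1 - φ_R(e)` equals
`1 ≥ |e - b| / l`. Hence `|e - b| / l ≤ 2ρ / l + (1 - φ_R(b)) + (1 - φ_R(e))`, and
averaging over `i` gives `limsup_n ≤ 2ρ / l + 2 (1 - ∫ φ_R dν)`. Letting `l → ∞` and then
`R → ∞` (dominated convergence: `∫ φ_R dν → ν(ℝ^d) = 1`) gives the claim.
-/

open MeasureTheory Filter Topology Set Metric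
open scoped ZeroAtInfty

noncomputable section

def cesaroMean (u : ℕ → ℝ) (n : ℕ) : ℝ := (1 / (n : ℝ)) * ∑ i ∈ Finset.range n, u i

section CesaroMean

variable {u v : ℕ → ℝ} {a b : ℝ}

lemma cesaroMean_nonneg (hu : ∀ i, 0 ≤ u i) (n : ℕ) : 0 ≤ cesaroMean u n :=
  mul_nonneg (by positivity) (Finset.sum_nonneg fun i _ => hu i)

lemma cesaroMean_mono (huv : ∀ i, u i ≤ v i) (n : ℕ) : cesaroMean u n ≤ cesaroMean v n :=
  mul_le_mul_of_nonneg_left (Finset.sum_le_sum fun i _ => huv i) (by positivity)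

lemma cesaroMean_div_const (c : ℝ) (n : ℕ) :
    cesaroMean (fun i => u i / c) n = 1 / (n * c) * ∑ i ∈ Finset.range n, u i := by
  rw [cesaroMean, ← Finset.sum_div]
  ring

lemma cesaroMean_add (n : ℕ) :
    cesaroMean (fun i => u i + v i) n = cesaroMean u n + cesaroMean v n := by
  simp only [cesaroMean, Finset.sum_add_distrib, mul_add]

lemma cesaroMean_sub (n : ℕ) :
    cesaroMean (fun i => u i - v i) n = cesaroMean u n - cesaroMean v n := by
  simp only [cesaroMean, Finset.sum_sub_distrib, mul_sub]

lemma tendsto_cesaroMean_const (c : ℝ) : Tendsto (cesaroMean fun _ => c) atTop (𝓝 c) :=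
  (tendsto_const_nhds (x := c)).cesaro.congr fun n => by rw [cesaroMean, one_div]

lemma Filter.Tendsto.cesaroMean_add (hu : Tendsto (cesaroMean u) atTop (𝓝 a))
    (hv : Tendsto (cesaroMean v) atTop (𝓝 b)) :
    Tendsto (cesaroMean fun i => u i + v i) atTop (𝓝 (a + b)) :=
  (hu.add hv).congr fun n => (_root_.cesaroMean_add n).symm

lemma Filter.Tendsto.cesaroMean_sub (hu : Tendsto (cesaroMean u) atTop (𝓝 a))
    (hv : Tendsto (cesaroMean v) atTop (𝓝 b)) :
    Tendsto (cesaroMean fun i => u i - v i) atTop (𝓝 (a - b)) :=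
  (hu.sub hv).congr fun n => (_root_.cesaroMean_sub n).symm

end CesaroMean

lemma limsup_mem_Icc_of_le_of_tendsto {ι : Type*} {F : Filter ι} [NeBot F] {a c : ι → ℝ}
    {C : ℝ} (ha : ∀ i, 0 ≤ a i) (hac : ∀ i, a i ≤ c i) (hc : Tendsto c F (𝓝 C)) :
    limsup a F ∈ Icc 0 C := by
  have hbdd : IsBoundedUnder (· ≤ ·) F a :=
    hc.isBoundedUnder_le.mono_le (Eventually.of_forall hac)
  refine ⟨le_limsup_of_frequently_le (Frequently.of_forall ha) hbdd, ?_⟩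
  calc limsup a F ≤ limsup c F :=
        limsup_le_limsup (Eventually.of_forall hac) (isCoboundedUnder_le_of_le F ha)
          hc.isBoundedUnder_le
    _ = C := hc.limsup_eq

lemma tendsto_of_forall_eventually_mem_Icc {α ι κ : Type*} [TopologicalSpace α]
    [LinearOrder α] [OrderTopology α] {F : Filter ι} {G : Filter κ} [NeBot G] {L : ι → α}
    {g : κ → ι → α} {u : κ → α} {a : α} (hL : ∀ k, ∀ᶠ i in F, L i ∈ Icc a (g k i))
    (hg : ∀ k, Tendsto (g k) F (𝓝 (u k))) (hu : Tendsto u G (𝓝 a)) :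
    Tendsto L F (𝓝 a) := by
  refine tendsto_order.2 ⟨fun b hb => ?_, fun b hb => ?_⟩
  · obtain ⟨k⟩ := G.nonempty_of_neBot
    exact (hL k).mono fun i hi => hb.trans_le hi.1
  · obtain ⟨k, hk⟩ := (hu.eventually (gt_mem_nhds hb)).exists
    filter_upwards [hL k, (hg k).eventually (gt_mem_nhds hk)] with i hi hgi
    exact hi.2.trans_lt hgi

section Displacement

variable {E : Type*} [SeminormedAddCommGroup E] {φ : E → ℝ} {ρ l : ℝ}

lemma norm_sub_div_le_of_support_subset (hρ : 0 ≤ ρ) (hl : 0 < l) (hφ : ∀ z, φ z ≤ 1)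
    (hsupp : Function.support φ ⊆ closedBall 0 ρ) {x y : E} (hxy : ‖x - y‖ ≤ l) :
    ‖x - y‖ / l ≤ 2 * ρ / l + (1 - φ x) + (1 - φ y) := by
  have hx := sub_nonneg.2 (hφ x)
  have hy := sub_nonneg.2 (hφ y)
  by_cases hxy0 : φ x ≠ 0 ∧ φ y ≠ 0
  · have hxρ : ‖x‖ ≤ ρ := mem_closedBall_zero_iff.1 (hsupp hxy0.1)
    have hyρ : ‖y‖ ≤ ρ := mem_closedBall_zero_iff.1 (hsupp hxy0.2)
    have : ‖x - y‖ / l ≤ 2 * ρ / l :=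
      div_le_div_of_nonneg_right (by linarith [norm_sub_le x y]) hl.le
    linarith
  · have h2ρ : 0 ≤ 2 * ρ / l := by positivity
    have h1 : ‖x - y‖ / l ≤ 1 := (div_le_one hl).2 hxy
    rcases not_and_or.1 hxy0 with h | h <;> rw [not_not] at h <;> linarith

lemma limsup_cesaroMean_norm_sub_div_mem_Icc (hρ : 0 ≤ ρ) (hl : 0 < l) (hφ : ∀ z, φ z ≤ 1)
    (hsupp : Function.support φ ⊆ closedBall 0 ρ) {x y : ℕ → E} (hxy : ∀ i, ‖x i - y i‖ ≤ l)
    {I J : ℝ} (hx : Tendsto (cesaroMean fun i => φ (x i)) atTop (𝓝 I))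
    (hy : Tendsto (cesaroMean fun i => φ (y i)) atTop (𝓝 J)) :
    limsup (cesaroMean fun i => ‖x i - y i‖ / l) atTop ∈
      Icc 0 (2 * ρ / l + (1 - I) + (1 - J)) :=
  limsup_mem_Icc_of_le_of_tendsto (cesaroMean_nonneg fun i => by positivity)
    (cesaroMean_mono fun i => norm_sub_div_le_of_support_subset hρ hl hφ hsupp (hxy i))
    (((tendsto_cesaroMean_const _).cesaroMean_add
      ((tendsto_cesaroMean_const 1).cesaroMean_sub hx)).cesaroMean_add
      ((tendsto_cesaroMean_const 1).cesaroMean_sub hy))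

end Displacement

namespace ContDiffBump

variable {E : Type*} [NormedAddCommGroup E] [NormedSpace ℝ E] [HasContDiffBump E] {c : E}

def toC₀ [FiniteDimensional ℝ E] (f : ContDiffBump c) : C₀(E, ℝ) where
  toFun := f
  continuous_toFun := f.continuous
  zero_at_infty' := f.hasCompactSupport.is_zero_at_infty

@[simp]
lemma coe_toC₀ [FiniteDimensional ℝ E] (f : ContDiffBump c) : ⇑f.toC₀ = f := rfl

lemma tendsto_integral_of_tendsto_rIn [MeasurableSpace E] [OpensMeasurableSpace E]
    (μ : Measure E) [IsFiniteMeasure μ] {ι : Type*} {F : Filter ι} [F.IsCountablyGenerated]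
    (f : ι → ContDiffBump c) (hf : Tendsto (fun i => (f i).rIn) F atTop) :
    Tendsto (fun i => ∫ x, f i x ∂μ) F (𝓝 (μ.real univ)) := by
  have hlim : ∀ x, Tendsto (fun i => f i x) F (𝓝 1) := fun x =>
    tendsto_const_nhds.congr' <| (hf.eventually_ge_atTop (dist x c)).mono fun i hi =>
      ((f i).one_of_mem_closedBall hi).symm
  simpa using tendsto_integral_filter_of_dominated_convergence (fun _ => (1 : ℝ))
    (Eventually.of_forall fun i => (f i).continuous.aestronglyMeasurable)
    (Eventually.of_forall fun i => Eventually.of_forall fun x => by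
      simpa [abs_of_nonneg (f i).nonneg] using (f i).le_one)
    (integrable_const 1) (Eventually.of_forall hlim)

end ContDiffBump

/-- Let `ν` be a Borel probability measure on `ℝ^d`.  For each `l ∈ ℕ`
suppose given points `b_{i,l}, e_{i,l} ∈ ℝ^d` with `|e_{i,l} - b_{i,l}| ≤ l`, whose empirical
averages converge, for every `φ ∈ C₀(ℝ^d)`, to `∫ φ dν` (both for the `b`'s and the `e`'s).
Then `limsup_l limsup_n (1/(n·l)) Σ_{i=1}^n |e_{i,l} - b_{i,l}| = 0`. -/
theorem stmt13 (d : ℕ)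
    (ν : Measure (EuclideanSpace ℝ (Fin d))) [IsProbabilityMeasure ν]
    (b e : ℕ → ℕ → EuclideanSpace ℝ (Fin d))  -- `b l i` is the point `b_{i,l}`
    (hbe : ∀ l i, ‖e l i - b l i‖ ≤ (l : ℝ))
    (hb : ∀ l, ∀ φ : C₀(EuclideanSpace ℝ (Fin d), ℝ),
      Tendsto (fun n : ℕ => (1 / (n : ℝ)) * ∑ i ∈ Finset.range n, φ (b l i))
        atTop (𝓝 (∫ x, φ x ∂ν)))
    (he : ∀ l, ∀ φ : C₀(EuclideanSpace ℝ (Fin d), ℝ),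
      Tendsto (fun n : ℕ => (1 / (n : ℝ)) * ∑ i ∈ Finset.range n, φ (e l i))
        atTop (𝓝 (∫ x, φ x ∂ν))) :
    Filter.limsup
      (fun l : ℕ =>
        Filter.limsup
          (fun n : ℕ => (1 / ((n : ℝ) * l)) * ∑ i ∈ Finset.range n, ‖e l i - b l i‖)
          atTop)
      atTop = 0 := by
  let φ : ℕ → ContDiffBump (0 : EuclideanSpace ℝ (Fin d)) := fun R =>
    ⟨R + 1, R + 2, by positivity, by linarith⟩
  have hI : Tendsto (fun R => ∫ x, (φ R).toC₀ x ∂ν) atTop (𝓝 1) := by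
    simpa using ContDiffBump.tendsto_integral_of_tendsto_rIn ν φ
      (tendsto_atTop_add_const_right _ 1 tendsto_natCast_atTop_atTop)
  set I : ℕ → ℝ := fun R => ∫ x, (φ R).toC₀ x ∂ν
  have hu : Tendsto (fun R => (1 - I R) + (1 - I R)) atTop (𝓝 0) := by
    simpa using ((tendsto_const_nhds (x := (1 : ℝ))).sub hI).add
      ((tendsto_const_nhds (x := (1 : ℝ))).sub hI)
  simp only [← cesaroMean_div_const]
  refine Tendsto.limsup_eq (tendsto_of_forall_eventually_mem_Icc
    (g := fun (R l : ℕ) => 2 * ((R : ℝ) + 2) / l + (1 - I R) + (1 - I R)) (fun R => ?_)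
    (fun R => ?_) hu)
  · filter_upwards [eventually_gt_atTop 0] with l hl
    have hsupp : Function.support (φ R).toC₀ ⊆ closedBall 0 ((R : ℝ) + 2) :=
      (φ R).support_eq.trans_subset ball_subset_closedBall
    exact limsup_cesaroMean_norm_sub_div_mem_Icc (by positivity) (by exact_mod_cast hl)
      (fun _ => (φ R).le_one) hsupp (hbe l) (he l _) (hb l _)
  · simpa [add_assoc] using
      ((tendsto_const_div_atTop_nhds_zero_nat (2 * ((R : ℝ) + 2))).add_const (1 - I R)).add_const
        (1 - I R)
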